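/- arXiv:2507.16351 — 2 statements merged into one kernel-verified Lean document; each statement's English description precedes it below -/
import Mathlib

section
/- For every n ≥ 8 with n ≡ 2 (mod 3), the graph K₂ ∨ ((n−2)/3)·P₃ (the join of an edge with (n−2)/3 disjoint paths on 3 vertices) is planar, has n vertices, has (8n−13)/3 edges, and contains no vertex-disjoint union of a 3-cycle and a 5-cycle. -/
/-- `H` is a minor of `G`: branch sets are nonempty, connected, pairwise
disjoint, and adjacencies of `H` are realized between branch sets. -/
def SimpleGraph.IsMinorOf {α β : Type} (H : SimpleGraph α) (G : SimpleGraph β) : Prop :=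
  ∃ φ : α → Set β,
    (∀ a, (φ a).Nonempty) ∧
    (∀ a, ((G.induce (φ a)).Connected)) ∧
    (∀ a b, a ≠ b → Disjoint (φ a) (φ b)) ∧
    (∀ a b, H.Adj a b → ∃ x ∈ φ a, ∃ y ∈ φ b, G.Adj x y)

/-- Planarity via Wagner's theorem: no `K₅` minor and no `K₃,₃` minor. -/
def SimpleGraph.IsPlanar {β : Type} (G : SimpleGraph β) : Prop :=
  ¬ (completeGraph (Fin 5)).IsMinorOf G ∧
  ¬ (completeBipartiteGraph (Fin 3) (Fin 3)).IsMinorOf G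
/-- `G` contains a vertex-disjoint union of a 3-cycle and a 5-cycle. -/
def SimpleGraph.ContainsC3C5 {V : Type} (G : SimpleGraph V) : Prop :=
  ∃ (a b : V) (c : G.Walk a a) (d : G.Walk b b),
    c.IsCycle ∧ c.length = 3 ∧ d.IsCycle ∧ d.length = 5 ∧
    ∀ x, x ∈ c.support → x ∉ d.support
/-- The join `K₂ ∨ (k · P₃)`: an edge `{u,v}` (the two vertices `Sum.inl 0`,
`Sum.inl 1`) joined to `k` vertex-disjoint paths on 3 vertices. -/
def joinK2P3 (k : ℕ) : SimpleGraph (Fin 2 ⊕ Fin k × Fin 3) :=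
  SimpleGraph.fromRel (fun x y =>
    match x, y with
    | Sum.inl a, Sum.inl b => a ≠ b
    | Sum.inl _, Sum.inr _ => True
    | Sum.inr _, Sum.inl _ => False
    | Sum.inr (i, a), Sum.inr (j, b) => i = j ∧ (b : ℕ) = (a : ℕ) + 1)

/-!
The two apexes `Sum.inl t` (the vertices of `K₂`) lie in at most two branch sets of a minor model;
every other branch set is connected and avoids the apexes, so it lies in a single copy of `P₃`. For `K₅`, three pairwise
adjacent such branch sets share one copy, and every edge of `P₃` uses its middle vertex, which lies
in only one of them. For `K₃,₃`, the (at least four) apex-free branch sets are linked through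
`K₃,₃` and so are packed into the three vertices of a single copy.

Since `P₃` has no walk `a b c d` with `a ≠ c` and `b ≠ d`, every four consecutive vertices of a
cycle include an apex. So the triangle meets an apex, and the 5-cycle, which can then meet only the
other apex, would contain four consecutive non-apex vertices.
-/

open SimpleGraph Finset

lemma Finset.card_le_card_of_pairwise_disjoint {ι β γ : Type*} {φ : ι → Set β}
    (hφ : ∀ a b, a ≠ b → Disjoint (φ a) (φ b)) (f : γ → β) {s : Finset ι} {t : Finset γ}
    (h : ∀ a ∈ s, ∃ c ∈ t, f c ∈ φ a) : s.card ≤ t.card :=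
  card_le_card_of_forall_subsingleton (fun a c => f c ∈ φ a) h fun _ _ a ha b hb =>
    by_contra fun hab => Set.disjoint_left.1 (hφ a b hab) ha.2 hb.2

lemma SimpleGraph.apply_eq_of_preconnected_induce {V α : Type*} {G : SimpleGraph V} {S : Set V}
    (hS : (G.induce S).Preconnected) (f : V → α) (hf : ∀ x ∈ S, ∀ y ∈ S, G.Adj x y → f x = f y)
    {x y : V} (hx : x ∈ S) (hy : y ∈ S) : f x = f y := by
  suffices ∀ {u v : S}, (G.induce S).Walk u v → f u = f v from
    let ⟨w⟩ := hS ⟨x, hx⟩ ⟨y, hy⟩; this w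
  intro u v w
  induction w with
  | nil => rfl
  | @cons u v _ h _ ih => exact (hf _ u.2 _ v.2 h).trans ih

lemma SimpleGraph.pathGraph_three_adj_eq_one {a b : Fin 3} (h : (pathGraph 3).Adj a b) :
    a = 1 ∨ b = 1 := by
  rw [pathGraph_adj] at h
  omega

lemma SimpleGraph.pathGraph_three_not_adj_adj_adj {a b c d : Fin 3} (hab : (pathGraph 3).Adj a b)
    (hbc : (pathGraph 3).Adj b c) (hcd : (pathGraph 3).Adj c d) (hac : a ≠ c) (hbd : b ≠ d) :
    False := by
  simp only [pathGraph_adj, ne_eq, Fin.ext_iff] at *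
  omega

namespace joinK2P3

variable {k : ℕ}

@[simp] lemma adj_inl_inl {s t : Fin 2} : (joinK2P3 k).Adj (.inl s) (.inl t) ↔ s ≠ t := by
  simp [joinK2P3, eq_comm]

@[simp] lemma adj_inl_inr {s : Fin 2} {p : Fin k × Fin 3} : (joinK2P3 k).Adj (.inl s) (.inr p) := by
  simp [joinK2P3]

@[simp] lemma adj_inr_inl {s : Fin 2} {p : Fin k × Fin 3} : (joinK2P3 k).Adj (.inr p) (.inl s) := by
  simp [joinK2P3]

@[simp] lemma adj_inr_inr {p q : Fin k × Fin 3} :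
    (joinK2P3 k).Adj (.inr p) (.inr q) ↔ p.1 = q.1 ∧ (pathGraph 3).Adj p.2 q.2 := by
  obtain ⟨i, a⟩ := p
  obtain ⟨j, b⟩ := q
  simp only [joinK2P3, fromRel_adj, pathGraph_adj]
  grind

section Degrees

variable [DecidableRel (joinK2P3 k).Adj]

lemma degree_inl (t : Fin 2) : (joinK2P3 k).degree (.inl t) = 3 * k + 1 := by
  have : (joinK2P3 k).neighborFinset (.inl t) = univ.erase (.inl t) := by
    ext (s | p) <;> simp [eq_comm]
  rw [← card_neighborFinset_eq_degree, this, card_erase_of_mem (mem_univ _), card_univ]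
  simp only [Fintype.card_sum, Fintype.card_prod, Fintype.card_fin]
  omega

lemma degree_inr (i : Fin k) (a : Fin 3) :
    (joinK2P3 k).degree (.inr (i, a)) = if a = 1 then 4 else 3 := by
  have : (joinK2P3 k).neighborFinset (.inr (i, a)) =
      univ.image .inl ∪
        (univ.filter fun b : Fin 3 => (a : ℕ) + 1 = b ∨ (b : ℕ) + 1 = a).image
          fun b => .inr (i, b) := by
    ext (s | ⟨j, b⟩) <;> simp [pathGraph_adj, eq_comm, and_comm]
  rw [← card_neighborFinset_eq_degree, this,
    card_union_of_disjoint (by simp [Finset.disjoint_left]),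
    card_image_of_injective _ Sum.inl_injective,
    card_image_of_injective _ (fun b c h => by simpa using h)]
  fin_cases a <;> rfl

lemma sum_degrees : ∑ v, (joinK2P3 k).degree v = 16 * k + 2 := by
  simp only [Fintype.sum_sum_type, Fintype.sum_prod_type, Fin.sum_univ_three, degree_inl,
    degree_inr, sum_const, card_univ, Fintype.card_fin, smul_eq_mul, Fin.reduceEq, ↓reduceIte]
  ring

end Degrees

lemma edgeSet_ncard : (joinK2P3 k).edgeSet.ncard = 8 * k + 1 := by
  classical
  have := (joinK2P3 k).sum_degrees_eq_twice_card_edges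
  rw [sum_degrees] at this
  rw [← coe_edgeFinset, Set.ncard_coe_finset]
  omega

def copy (i : Fin k) : Set (Fin 2 ⊕ Fin k × Fin 3) := Set.range fun a => .inr (i, a)

lemma exists_subset_copy {S : Set (Fin 2 ⊕ Fin k × Fin 3)} (hS : ((joinK2P3 k).induce S).Connected)
    (hapex : ∀ t, .inl t ∉ S) : ∃ i, S ⊆ copy i := by
  obtain ⟨⟨x₀, hx₀⟩⟩ := hS.nonempty
  obtain _ | ⟨i, a⟩ := x₀
  · exact absurd hx₀ (hapex _)
  refine ⟨i, fun x hx => ?_⟩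
  obtain _ | ⟨j, b⟩ := x
  · exact absurd hx (hapex _)
  have hcopy := apply_eq_of_preconnected_induce hS.preconnected
    (Sum.elim (fun _ => none) fun p => some p.1) ?_ hx hx₀
  · simp only [Sum.elim_inr, Option.some.injEq] at hcopy
    exact ⟨b, by rw [hcopy]⟩
  rintro (_ | p) hp (_ | q) hq hpq
  · exact absurd hp (hapex _)
  · exact absurd hp (hapex _)
  · exact absurd hq (hapex _)
  · simpa using (adj_inr_inr.1 hpq).1

lemma eq_and_middle_mem_of_adj {S T : Set (Fin 2 ⊕ Fin k × Fin 3)} {i j : Fin k}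
    (hS : S ⊆ copy i) (hT : T ⊆ copy j)
    (h : ∃ x ∈ S, ∃ y ∈ T, (joinK2P3 k).Adj x y) : i = j ∧ (.inr (i, 1) ∈ S ∨ .inr (i, 1) ∈ T) := by
  obtain ⟨x, hx, y, hy, hxy⟩ := h
  obtain ⟨a, rfl⟩ := hS hx
  obtain ⟨b, rfl⟩ := hT hy
  obtain ⟨rfl, hab⟩ := adj_inr_inr.1 hxy
  refine ⟨rfl, ?_⟩
  rcases pathGraph_three_adj_eq_one hab with rfl | rfl
  exacts [.inl hx, .inr hy]

variable {ι : Type*} {φ : ι → Set (Fin 2 ⊕ Fin k × Fin 3)}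

lemma exists_branchSets_subset_copy [Fintype ι] (hconn : ∀ a, ((joinK2P3 k).induce (φ a)).Connected)
    (hdisj : ∀ a b, a ≠ b → Disjoint (φ a) (φ b)) :
    ∃ s : Finset ι, Fintype.card ι ≤ s.card + 2 ∧ ∀ a ∈ s, ∃ i, φ a ⊆ copy i := by
  classical
  refine ⟨univ.filter fun a => ∀ t, .inl t ∉ φ a, ?_, fun a ha => exists_subset_copy (hconn a) ?_⟩
  · have : (univ.filter fun a => ∀ t, .inl t ∉ φ a)ᶜ.card ≤ (univ : Finset (Fin 2)).card :=
      card_le_card_of_pairwise_disjoint hdisj .inl fun a ha => by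
        simpa [or_iff_not_imp_left] using mem_compl.1 ha
    rw [card_compl] at this
    simp only [card_univ, Fintype.card_fin] at this
    omega
  · simpa using ha

lemma card_le_three_of_subset_copy (hne : ∀ a, (φ a).Nonempty)
    (hdisj : ∀ a b, a ≠ b → Disjoint (φ a) (φ b)) {s : Finset ι} {i : Fin k}
    (hs : ∀ a ∈ s, φ a ⊆ copy i) : s.card ≤ 3 := by
  simpa using card_le_card_of_pairwise_disjoint hdisj (fun v => .inr (i, v)) (t := univ)
    fun a ha => by
      obtain ⟨x, hx⟩ := hne a
      obtain ⟨v, rfl⟩ := hs a ha hx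
      exact ⟨v, mem_univ _, hx⟩

lemma not_completeGraph_isMinorOf : ¬ (completeGraph (Fin 5)).IsMinorOf (joinK2P3 k) := by
  rintro ⟨φ, -, hconn, hdisj, hadj⟩
  obtain ⟨s, hs, hcopy⟩ := exists_branchSets_subset_copy hconn hdisj
  have : 2 < s.card := by simp only [Fintype.card_fin] at hs; omega
  obtain ⟨a, ha, b, hb, c, hc, hab, hac, hbc⟩ := two_lt_card.1 this
  obtain ⟨i, hi⟩ := hcopy a ha
  obtain ⟨j, hj⟩ := hcopy b hb
  obtain ⟨l, hl⟩ := hcopy c hc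
  obtain ⟨rfl, hab'⟩ := eq_and_middle_mem_of_adj hi hj (hadj a b hab)
  obtain ⟨rfl, hac'⟩ := eq_and_middle_mem_of_adj hi hl (hadj a c hac)
  obtain ⟨-, hbc'⟩ := eq_and_middle_mem_of_adj hj hl (hadj b c hbc)
  have := Set.disjoint_left.1 (hdisj a b hab)
  have := Set.disjoint_left.1 (hdisj a c hac)
  have := Set.disjoint_left.1 (hdisj b c hbc)
  tauto

lemma not_completeBipartiteGraph_isMinorOf :
    ¬ (completeBipartiteGraph (Fin 3) (Fin 3)).IsMinorOf (joinK2P3 k) := by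
  rintro ⟨φ, hne, hconn, hdisj, hadj⟩
  obtain ⟨s, hs, hcopy⟩ := exists_branchSets_subset_copy hconn hdisj
  simp only [Fintype.card_sum, Fintype.card_fin] at hs
  have hsum := card_toLeft_add_card_toRight (u := s)
  have hcardL := card_le_univ s.toLeft
  have hcardR := card_le_univ s.toRight
  simp only [Fintype.card_fin] at hcardL hcardR
  obtain ⟨l, hl⟩ := card_pos.1 (show 0 < s.toLeft.card by omega)
  obtain ⟨r, hr⟩ := card_pos.1 (show 0 < s.toRight.card by omega)
  rw [mem_toLeft] at hl
  rw [mem_toRight] at hr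
  obtain ⟨i, hi⟩ := hcopy _ hl
  have hright : ∀ r', .inr r' ∈ s → φ (.inr r') ⊆ copy i := fun r' hr' => by
    obtain ⟨j, hj⟩ := hcopy _ hr'
    rwa [← (eq_and_middle_mem_of_adj hi hj (hadj (.inl l) (.inr r') (by simp))).1] at hj
  have hleft : ∀ l', .inl l' ∈ s → φ (.inl l') ⊆ copy i := fun l' hl' => by
    obtain ⟨j, hj⟩ := hcopy _ hl'
    rwa [(eq_and_middle_mem_of_adj hj (hright r hr) (hadj (.inl l') (.inr r) (by simp))).1] at hj
  have := card_le_three_of_subset_copy hne hdisj (s := s) (i := i) fun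
    | .inl l', hl' => hleft l' hl'
    | .inr r', hr' => hright r' hr'
  omega

lemma isPlanar : (joinK2P3 k).IsPlanar :=
  ⟨not_completeGraph_isMinorOf, not_completeBipartiteGraph_isMinorOf⟩

lemma not_adj_adj_adj {p q r s : Fin k × Fin 3} (hpq : (joinK2P3 k).Adj (.inr p) (.inr q))
    (hqr : (joinK2P3 k).Adj (.inr q) (.inr r)) (hrs : (joinK2P3 k).Adj (.inr r) (.inr s))
    (hpr : p ≠ r) (hqs : q ≠ s) : False := by
  obtain ⟨hpq₁, hpq₂⟩ := adj_inr_inr.1 hpq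
  obtain ⟨hqr₁, hqr₂⟩ := adj_inr_inr.1 hqr
  obtain ⟨hrs₁, hrs₂⟩ := adj_inr_inr.1 hrs
  exact pathGraph_three_not_adj_adj_adj hpq₂ hqr₂ hrs₂ (fun h => hpr (Prod.ext (hpq₁.trans hqr₁) h))
    (fun h => hqs (Prod.ext (hqr₁.trans hrs₁) h))

variable {v : Fin 2 ⊕ Fin k × Fin 3} {c : (joinK2P3 k).Walk v v}

lemma not_forall_isRight_getVert_of_isCycle (hc : c.IsCycle) {n : ℕ} (hn : n + 3 ≤ c.length) :
    ¬ ∀ m, n ≤ m → m ≤ n + 3 → (c.getVert m).isRight := by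
  intro h
  obtain ⟨p, hp⟩ := Sum.isRight_iff.1 (h n le_rfl (by omega))
  obtain ⟨q, hq⟩ := Sum.isRight_iff.1 (h (n + 1) (by omega) (by omega))
  obtain ⟨r, hr⟩ := Sum.isRight_iff.1 (h (n + 2) (by omega) (by omega))
  obtain ⟨s, hs⟩ := Sum.isRight_iff.1 (h (n + 3) (by omega) le_rfl)
  have hpq := c.adj_getVert_succ (i := n) (by omega)
  have hqr := c.adj_getVert_succ (i := n + 1) (by omega)
  have hrs := c.adj_getVert_succ (i := n + 2) (by omega)
  have hpr := hc.getVert_sub_one_ne_getVert_add_one (i := n + 1) (by omega)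
  have hqs := hc.getVert_sub_one_ne_getVert_add_one (i := n + 2) (by omega)
  rw [show n + 1 - 1 = n by omega] at hpr
  rw [show n + 2 - 1 = n + 1 by omega] at hqs
  rw [hp, hq, hr, hs] at *
  exact not_adj_adj_adj hpq hqr hrs (fun h => hpr (h ▸ rfl)) (fun h => hqs (h ▸ rfl))

lemma exists_inl_mem_support_of_isCycle (hc : c.IsCycle) : ∃ t, .inl t ∈ c.support := by
  by_contra! h
  refine not_forall_isRight_getVert_of_isCycle hc (n := 0) (by simpa using hc.three_le_length)
    fun m _ _ => ?_
  have := c.getVert_mem_support m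
  cases hm : c.getVert m with
  | inl t => exact absurd (hm ▸ this) (h t)
  | inr _ => rfl

lemma length_le_four_of_isCycle (hc : c.IsCycle) (h : ∀ x ∈ c.support, x ≠ v → x.isRight) :
    c.length ≤ 4 := by
  by_contra! hlen
  refine not_forall_isRight_getVert_of_isCycle hc (n := 1) (by omega) fun m _ _ =>
    h _ (c.getVert_mem_support m) ?_
  rw [Ne, hc.getVert_endpoint_iff (by omega)]
  omega

lemma not_containsC3C5 : ¬ (joinK2P3 k).ContainsC3C5 := by
  rintro ⟨_, _, c, d, hc, -, hd, hd5, hdisj⟩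
  obtain ⟨t, ht⟩ := exists_inl_mem_support_of_isCycle hc
  obtain ⟨u, hu⟩ := exists_inl_mem_support_of_isCycle hd
  have htu : t ≠ u := by rintro rfl; exact hdisj _ ht hu
  have := length_le_four_of_isCycle (hd.rotate hu) fun x hx hxu => ?_
  · simp only [Walk.length_rotate] at this
    omega
  rw [Walk.mem_support_rotate_iff] at hx
  obtain s | p := x
  · have hst : s ≠ t := by rintro rfl; exact hdisj _ ht hx
    have hsu : s ≠ u := by rintro rfl; exact hxu rfl
    omega
  · rfl

end joinK2P3

theorem stmt4_general (n : ℕ) (hmod : n % 3 = 2) :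
    (joinK2P3 ((n - 2) / 3)).IsPlanar ∧
    Fintype.card (Fin 2 ⊕ Fin ((n - 2) / 3) × Fin 3) = n ∧
    (joinK2P3 ((n - 2) / 3)).edgeSet.ncard = (8 * n - 13) / 3 ∧
    ¬ (joinK2P3 ((n - 2) / 3)).ContainsC3C5 := by
  refine ⟨joinK2P3.isPlanar, ?_, ?_, joinK2P3.not_containsC3C5⟩
  · simp only [Fintype.card_sum, Fintype.card_prod, Fintype.card_fin]
    omega
  · rw [joinK2P3.edgeSet_ncard]
    omega

/-- For `n ≥ 8` with `n ≡ 2 (mod 3)`, the graph `K₂ ∨ ((n-2)/3)·P₃` is planar,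
has `n` vertices, `(8n-13)/3` edges, and no vertex-disjoint `C₃ ∪ C₅`. -/
theorem stmt4 (n : ℕ) (hn : 8 ≤ n) (hmod : n % 3 = 2) :
    (joinK2P3 ((n - 2) / 3)).IsPlanar ∧
    Fintype.card (Fin 2 ⊕ Fin ((n - 2) / 3) × Fin 3) = n ∧
    (joinK2P3 ((n - 2) / 3)).edgeSet.ncard = (8 * n - 13) / 3 ∧
    ¬ (joinK2P3 ((n - 2) / 3)).ContainsC3C5 :=
  stmt4_general n hmod
end

section
/- In the graph K₂ ∨ (k·P₃) with k ≥ 2 (join of an edge uv with k disjoint paths on 3 vertices), every cycle of length 5 passes through both u and v. -/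
namespace SimpleGraph.Walk

variable {V : Type*} {G : SimpleGraph V}

lemma IsCycle.exists_isPath_start_notMem_support {x : V} {c : G.Walk x x} (hc : c.IsCycle) :
    ∃ (y z : V) (p : G.Walk y z), p.IsPath ∧ p.length + 2 = c.length ∧
      x ∉ p.support ∧ p.support ⊆ c.support := by
  have hc3 := hc.three_le_length
  set q := c.tail.reverse
  have hq : q.IsPath := hc.isPath_tail.reverse
  have hq_nil : ¬ q.Nil := by
    rw [← length_eq_zero_iff, length_reverse, length_tail]; omega
  refine ⟨_, _, q.tail, hq.tail, ?_, ?_, ?_⟩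
  · rw [length_tail, length_reverse, length_tail]; omega
  · have := hq.support_nodup
    rw [← cons_support_tail hq_nil] at this
    exact (List.nodup_cons.mp this).1
  · intro v hv
    have hv : v ∈ c.tail.support.reverse :=
      support_reverse c.tail ▸ List.mem_of_mem_tail (q.support_tail_of_not_nil hq_nil ▸ hv)
    exact List.mem_of_mem_tail (c.support_tail_of_not_nil hc.not_nil ▸ List.mem_reverse.mp hv)

end SimpleGraph.Walk

namespace joinK2P3

variable {k : ℕ}

lemma fst_eq_of_adj_inr {p q : Fin k × Fin 3} (h : (joinK2P3 k).Adj (.inr p) (.inr q)) :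
    p.1 = q.1 := by
  obtain ⟨h₁, -⟩ | ⟨h₁, -⟩ := (SimpleGraph.fromRel_adj _ _ _).mp h |>.2
  · exact h₁
  · exact h₁.symm

lemma exists_eq_inr_of_mem_support {x y : Fin 2 ⊕ Fin k × Fin 3} (p : (joinK2P3 k).Walk x y)
    (hp : ∀ j, Sum.inl j ∉ p.support) {i : Fin k} {s : Fin 3} (hx : x = .inr (i, s)) :
    ∀ z ∈ p.support, ∃ t, z = .inr (i, t) := by
  induction p generalizing s with
  | nil => simp [hx]
  | @cons x v y h q ih =>
    subst hx
    obtain ⟨j⟩ | ⟨i', t⟩ := v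
    · exact absurd (by simp) (hp j)
    obtain rfl : i = i' := fst_eq_of_adj_inr h
    simp only [SimpleGraph.Walk.support_cons, List.mem_cons]
    rintro z (rfl | hz)
    · exact ⟨s, rfl⟩
    · exact ih (fun j hj => hp j (by simp [hj])) rfl z hz

lemma length_le_two_of_isPath {x y : Fin 2 ⊕ Fin k × Fin 3} {p : (joinK2P3 k).Walk x y}
    (hp : p.IsPath) (hinl : ∀ j, Sum.inl j ∉ p.support) : p.length ≤ 2 := by
  obtain ⟨j⟩ | ⟨i, s⟩ := x
  · exact absurd p.start_mem_support (hinl j)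
  have hsupp := exists_eq_inr_of_mem_support p hinl rfl
  let idx : Fin 2 ⊕ Fin k × Fin 3 → Fin 3 := Sum.elim (fun _ => 0) Prod.snd
  have hnodup : (p.support.map idx).Nodup := by
    refine hp.support_nodup.map_on fun z hz z' hz' h => ?_
    obtain ⟨t, rfl⟩ := hsupp z hz
    obtain ⟨t', rfl⟩ := hsupp z' hz'
    simp_all [idx]
  have := hnodup.length_le_card
  simp only [List.length_map, SimpleGraph.Walk.length_support, Fintype.card_fin] at this
  omega

theorem inl_mem_support_of_isCycle {a : Fin 2 ⊕ Fin k × Fin 3} {c : (joinK2P3 k).Walk a a}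
    (hc : c.IsCycle) (hlen : 5 ≤ c.length) (w : Fin 2) : Sum.inl w ∈ c.support := by
  by_contra hw
  by_cases hu : ∃ u, Sum.inl u ∈ c.support
  · obtain ⟨u, hu⟩ := hu
    obtain ⟨_, _, p, hp, hplen, hup, hpc⟩ := (hc.rotate hu).exists_isPath_start_notMem_support
    have hinl : ∀ j, Sum.inl j ∉ p.support := by
      intro j hj
      have hpc := (c.mem_support_rotate_iff _ hu).mp (hpc hj)
      have : j ≠ u := by rintro rfl; exact hup hj
      have : u ≠ w := by rintro rfl; exact hw hu
      have : j ≠ w := by rintro rfl; exact hw hpc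
      omega -- `j`, `u`, `w` would be three distinct elements of `Fin 2`
    have := length_le_two_of_isPath hp hinl
    simp only [SimpleGraph.Walk.length_rotate] at hplen
    omega
  · have := length_le_two_of_isPath hc.isPath_tail fun j hj =>
      hu ⟨j, List.mem_of_mem_tail (c.support_tail_of_not_nil hc.not_nil ▸ hj)⟩
    simp only [SimpleGraph.Walk.length_tail] at this
    omega

end joinK2P3

theorem stmt5_general (k : ℕ) (a : Fin 2 ⊕ Fin k × Fin 3)
    (c : (joinK2P3 k).Walk a a) (hc : c.IsCycle) (hlen : c.length = 5) :
    Sum.inl 0 ∈ c.support ∧ Sum.inl 1 ∈ c.support :=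
  ⟨joinK2P3.inl_mem_support_of_isCycle hc hlen.ge 0,
    joinK2P3.inl_mem_support_of_isCycle hc hlen.ge 1⟩

/-- In `K₂ ∨ (k·P₃)` with `k ≥ 2`, every 5-cycle passes through both `u` and `v`. -/
theorem stmt5 (k : ℕ) (hk : 2 ≤ k) (a : Fin 2 ⊕ Fin k × Fin 3)
    (c : (joinK2P3 k).Walk a a) (hc : c.IsCycle) (hlen : c.length = 5) :
    Sum.inl 0 ∈ c.support ∧ Sum.inl 1 ∈ c.support :=
  stmt5_general k a c hc hlen
end
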